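/- Let a ∈ ℝ with 0 < |a| < 1, k = 1/√(1-a²), P = [[0,1],[1,0]], and C = k·[[-ia, 1], [1, ia]]. Then Θ := C·P = k·[[1, -ia], [ia, 1]] is Hermitian, positive definite, and satisfies H†Θ = ΘH for H = [[2-ia, -1], [-1, 2+ia]]. -/

import Mathlib

open Matrix Complex ComplexOrder

noncomputable def H2 (a : ℝ) : Matrix (Fin 2) (Fin 2) ℂ :=
  !![2 - a * Complex.I, -1; -1, 2 + a * Complex.I]

/-! Up to the factor `k > 0`, `Θ` is `1 + a σ_y`, whose LDL factorization
`Bᴴ * diagonal ![1, 1 - a²] * B` with `B` unitriangular shows it is positive definite exactly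
when `a² < 1`; Hermiticity comes with positive definiteness. `Ch * P` merely swaps the columns
of `Ch`, and `(H2 a)ᴴ * Θ = Θ * H2 a` is a direct computation. -/

namespace Matrix

variable {𝕜 : Type*} [RCLike 𝕜]

theorem fin_two_eq_conjTranspose_mul_diagonal_mul {p q : ℝ} {z : 𝕜} (hp : p ≠ 0) :
    !![(p : 𝕜), z; star z, (q : 𝕜)] =
      (!![1, z / p; 0, 1])ᴴ * diagonal ![(p : 𝕜), (q - ‖z‖ ^ 2 / p : ℝ)] *
        !![1, z / p; 0, 1] := by
  have hp' : (p : 𝕜) ≠ 0 := RCLike.ofReal_ne_zero.mpr hp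
  ext i j
  fin_cases i <;> fin_cases j <;>
    simp [Matrix.mul_apply, Fin.sum_univ_two, RCLike.algebraMap_eq_ofReal] <;> field_simp
  rw [RCLike.conj_mul]
  ring

theorem posDef_fin_two {p q : ℝ} {z : 𝕜} (hp : 0 < p) (hdet : ‖z‖ ^ 2 < p * q) :
    (!![(p : 𝕜), z; star z, (q : 𝕜)]).PosDef := by
  rw [fin_two_eq_conjTranspose_mul_diagonal_mul hp.ne']
  refine PosDef.conjTranspose_mul_mul_same ?_ (mulVec_injective_of_isUnit ?_)
  · rw [posDef_diagonal_iff]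
    intro i
    fin_cases i
    · exact RCLike.ofReal_pos.mpr hp
    · refine RCLike.ofReal_pos.mpr ?_
      rw [sub_pos, div_lt_iff₀ hp]
      linarith
  · simp [isUnit_iff_isUnit_det, det_fin_two_of]

theorem mul_exchange_fin_two {α : Type*} [NonAssocSemiring α] (a b c d : α) :
    !![a, b; c, d] * !![0, 1; 1, 0] = !![b, a; d, c] := by
  ext i j
  fin_cases i <;> fin_cases j <;> simp

end Matrix

theorem posDef_one_add_smul_pauliY {a : ℝ} (ha : a ^ 2 < 1) :
    (!![1, -(a : ℂ) * I; (a : ℂ) * I, 1]).PosDef := by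
  have hz : ‖-(a : ℂ) * I‖ ^ 2 < 1 * 1 := by simpa using ha
  have hM : !![1, -(a : ℂ) * I; (a : ℂ) * I, 1] =
      !![((1 : ℝ) : ℂ), -(a : ℂ) * I; star (-(a : ℂ) * I), ((1 : ℝ) : ℂ)] := by
    simp
  rw [hM]
  exact Matrix.posDef_fin_two one_pos hz

theorem conjTranspose_H2_mul (a : ℝ) :
    (H2 a)ᴴ * !![1, -(a : ℂ) * I; (a : ℂ) * I, 1] =
      !![1, -(a : ℂ) * I; (a : ℂ) * I, 1] * H2 a := by
  ext i j
  fin_cases i <;> fin_cases j <;>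
    simp [H2, Matrix.mul_apply, Fin.sum_univ_two, map_ofNat] <;> ring_nf

theorem CPT_metric_general (a : ℝ) (ha' : |a| < 1) :
    let k : ℝ := 1 / Real.sqrt (1 - a ^ 2)
    let Ch : Matrix (Fin 2) (Fin 2) ℂ :=
      (k : ℂ) • !![-(a : ℂ) * Complex.I, 1; 1, (a : ℂ) * Complex.I]
    let P : Matrix (Fin 2) (Fin 2) ℂ := !![0, 1; 1, 0]
    let Θ : Matrix (Fin 2) (Fin 2) ℂ :=
      (k : ℂ) • !![1, -(a : ℂ) * Complex.I; (a : ℂ) * Complex.I, 1]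
    Ch * P = Θ ∧ Θ.IsHermitian ∧ Θ.PosDef ∧ (H2 a)ᴴ * Θ = Θ * H2 a := by
  intro k Ch P Θ
  have ha : a ^ 2 < 1 := (sq_lt_one_iff_abs_lt_one a).mpr ha'
  have hk : 0 < k := one_div_pos.mpr (Real.sqrt_pos.mpr (sub_pos.mpr ha))
  have hΘ : Θ.PosDef := (posDef_one_add_smul_pauliY ha).smul (zero_lt_real.mpr hk)
  refine ⟨?_, hΘ.isHermitian, hΘ, ?_⟩
  · simp only [Ch, P, Θ, smul_mul_assoc, mul_exchange_fin_two]
  · simp only [Θ, mul_smul_comm, smul_mul_assoc, conjTranspose_H2_mul]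

theorem CPT_metric (a : ℝ) (ha : 0 < |a|) (ha' : |a| < 1) :
    let k : ℝ := 1 / Real.sqrt (1 - a ^ 2)
    let Ch : Matrix (Fin 2) (Fin 2) ℂ :=
      (k : ℂ) • !![-(a : ℂ) * Complex.I, 1; 1, (a : ℂ) * Complex.I]
    let P : Matrix (Fin 2) (Fin 2) ℂ := !![0, 1; 1, 0]
    let Θ : Matrix (Fin 2) (Fin 2) ℂ :=
      (k : ℂ) • !![1, -(a : ℂ) * Complex.I; (a : ℂ) * Complex.I, 1]
    Ch * P = Θ ∧ Θ.IsHermitian ∧ Θ.PosDef ∧ (H2 a)ᴴ * Θ = Θ * H2 a :=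
  CPT_metric_general a ha'
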